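/- Let G be a bipartite constraint graph with order ≺ and β : V → {1,2}, and let f : V → ℤ be a map such that for all u,v ∈ V with δ(u,v) < ∞ one has |f(u) − f(v)| ≤ δ(u,v) and f(u) + f(v) + δ(u,v) is even. Then f is a homomorphism of G to P_∞: for every edge uv of G, |f(u) − f(v)| = 1. -/
import Mathlib


namespace CountingCSP

/-! ## The basic framework

An instance `Ψ` of `{1,2}`-CSP is modelled by a number `m` of variables, the variable set
being `Fin m` with its natural linear order `<` (the order of quantification `≺`), a function
`β : Fin m → ℕ` taking values in `{1,2}` (variable `v` is quantified by `∃^{≥ β v}`), and a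
simple graph `G` on `Fin m` (the constraint graph).  A target graph is a type `B` together
with an adjacency relation `E : B → B → Prop` (loops allowed in general). -/

/-- Adjacency of the finite path `P_n` on the vertices `{1,…,n}`, modelled as `Fin n`. -/
def pathAdj (n : ℕ) (i j : Fin n) : Prop :=
  (i : ℕ) + 1 = j ∨ (j : ℕ) + 1 = i

/-- Adjacency of the infinite path `P_∞` on `ℤ`: `i` and `j` adjacent iff `|i - j| = 1`. -/
def intPathAdj (i j : ℤ) : Prop := |i - j| = 1

/-- `SatFrom β G E i f` : processing the variables of the instance in `≺`-increasing order
starting from variable `i`, where the earlier variables have been assigned according to `f`,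
the instance can be satisfied.  At each variable `v` one asks for a set `S` of `β v` distinct
elements of the target such that for every `b ∈ S` the rest of the instance can be satisfied
with `v ↦ b`; when all variables are assigned, the assignment must be a homomorphism. -/
def SatFrom {m : ℕ} {B : Type*} (β : Fin m → ℕ) (G : SimpleGraph (Fin m))
    (E : B → B → Prop) (i : ℕ) (f : Fin m → B) : Prop :=
  if h : i < m then
    ∃ S : Finset B, S.card = β ⟨i, h⟩ ∧
      ∀ b ∈ S, SatFrom β G E (i + 1) (Function.update f ⟨i, h⟩ b)
  else ∀ u v : Fin m, G.Adj u v → E (f u) (f v)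
termination_by m - i
decreasing_by omega

/-- `Sat β G E` : the instance with quantifiers `β` and constraint graph `G` is satisfied by
the target graph with adjacency `E`  (i.e. `H ⊨ Ψ`).  The initial assignment is irrelevant
since every variable is assigned before it is used. -/
def Sat {m : ℕ} {B : Type*} (β : Fin m → ℕ) (G : SimpleGraph (Fin m))
    (E : B → B → Prop) : Prop :=
  ∀ f : Fin m → B, SatFrom β G E 0 f

/-- A graph is bipartite iff it has a proper 2-colouring. -/
def Bipartite {V : Type*} (G : SimpleGraph V) : Prop :=
  ∃ c : V → Bool, ∀ u v, G.Adj u v → c u ≠ c v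

/-! ## Walks, looping walks, and the distance function δ -/

/-- `λ(Q) = |Q| − 2·∑_{interior vertices x of Q} (β x − 1)`, where `|Q|` is the length
(number of edges) of the walk `Q = x₁,…,x_r`, and the interior vertices are `x₂,…,x_{r−1}`. -/
def lamWalk {m : ℕ} (β : Fin m → ℕ) (Q : List (Fin m)) : ℤ :=
  ((Q.length : ℤ) - 1) - 2 * (((Q.drop 1).dropLast).map (fun x => (β x : ℤ) - 1)).sum

/-- Looping walks of `G` (with respect to the quantification order `<` on `Fin m`):
a walk `x₁,…,x_r` with `x₁ ≠ x_r` such that if `r ≥ 3` then both endpoints strictly precede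
every interior vertex and the walk splits at some interior position into two looping walks. -/
inductive IsLoopingWalk {m : ℕ} (G : SimpleGraph (Fin m)) : List (Fin m) → Prop
  | base {x y : Fin m} : G.Adj x y → IsLoopingWalk G [x, y]
  | comb {x y z : Fin m} {Q₁ Q₂ : List (Fin m)} :
      IsLoopingWalk G (x :: (Q₁ ++ [y])) →
      IsLoopingWalk G (y :: (Q₂ ++ [z])) →
      x ≠ z →
      (∀ w ∈ Q₁ ++ y :: Q₂, x < w ∧ z < w) →
      IsLoopingWalk G (x :: (Q₁ ++ y :: Q₂ ++ [z]))

/-- `Q` is a looping walk between `u` and `v` (in either direction). -/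
def LoopingWalkBetween {m : ℕ} (G : SimpleGraph (Fin m)) (u v : Fin m)
    (Q : List (Fin m)) : Prop :=
  IsLoopingWalk G Q ∧
    ((Q.head? = some u ∧ Q.getLast? = some v) ∨ (Q.head? = some v ∧ Q.getLast? = some u))

/-- `IsDelta G β u v d` : `d = δ(u,v)`, i.e. `d` is the minimum of `λ(Q)` over all looping
walks `Q` of `G` between `u` and `v`.  (`δ(u,v) < ∞` corresponds to `∃ d, IsDelta G β u v d`.) -/
def IsDelta {m : ℕ} (G : SimpleGraph (Fin m)) (β : Fin m → ℕ) (u v : Fin m) (d : ℤ) : Prop :=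
  (∃ Q, LoopingWalkBetween G u v Q ∧ lamWalk β Q = d) ∧
    ∀ Q, LoopingWalkBetween G u v Q → d ≤ lamWalk β Q

/-! ## The functions γ and γ′ -/

/-- `IsGammaVal G β g v t` : `t = max(0, max_{u ≺ v, δ(u,v) < ∞} (g u − δ(u,v) + β v − 1))`. -/
def IsGammaVal {m : ℕ} (G : SimpleGraph (Fin m)) (β : Fin m → ℕ) (g : Fin m → ℤ)
    (v : Fin m) (t : ℤ) : Prop :=
  0 ≤ t ∧
  (∀ u, u < v → ∀ d, IsDelta G β u v d → g u - d + (β v : ℤ) - 1 ≤ t) ∧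
  (t = 0 ∨ ∃ u, u < v ∧ ∃ d, IsDelta G β u v d ∧ t = g u - d + (β v : ℤ) - 1)

/-- `g` is the function `γ`: `γ(v) = 0` for the `≺`-least vertex, and otherwise
`γ(v) = β(v) − 1 + max(0, max_{u ≺ v, δ(u,v) < ∞} (γ(u) − δ(u,v) + β(v) − 1))`. -/
def IsGamma {m : ℕ} (G : SimpleGraph (Fin m)) (β : Fin m → ℕ) (g : Fin m → ℤ) : Prop :=
  ∀ v : Fin m,
    if (v : ℕ) = 0 then g v = 0
    else ∃ t, IsGammaVal G β g v t ∧ g v = (β v : ℤ) - 1 + t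

/-- `g` is the function `γ′`:
`γ′(v) = β(v) − 1 + max(0, max_{u ≺ v, δ(u,v) < ∞} (γ′(u) − δ(u,v) + β(v) − 1))`
(so `γ′(v) = β(v) − 1` for the `≺`-least vertex). -/
def IsGamma' {m : ℕ} (G : SimpleGraph (Fin m)) (β : Fin m → ℕ) (g : Fin m → ℤ) : Prop :=
  ∀ v : Fin m, ∃ t, IsGammaVal G β g v t ∧ g v = (β v : ℤ) - 1 + t

/-! ## The closure sets (F, R⁺, R⁻) for the {2}-CSP(K₄) algorithm -/

mutual
/-- Membership in the closure set `F` of pairs (initialised as the edge set of `G`). -/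
inductive InF {m : ℕ} (G : SimpleGraph (Fin m)) : Finset (Fin m) → Prop
  | edge {x y : Fin m} : G.Adj x y → InF G {x, y}
  | x3a {x y w z : Fin m} : [x, y, w, z].Pairwise (· ≠ ·) →
      x < z → y < z → w < z → ¬(x < w ∧ y < w) →
      InF G {w, z} → InRp G {x, y, z} → InF G {x, w}
  | x3b {x y w z : Fin m} : [x, y, w, z].Pairwise (· ≠ ·) →
      x < z → y < z → w < z → ¬(x < w ∧ y < w) →
      InF G {w, z} → InRp G {x, y, z} → InF G {y, w}
  | x4 {x y w z : Fin m} : [x, y, w, z].Pairwise (· ≠ ·) →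
      x < y → w < y → y < z →
      InRp G {x, y, z} → InRm G {w, y, z} → InF G {x, w}
  | x7a {x y q w z : Fin m} : [x, y, q, w, z].Pairwise (· ≠ ·) →
      x < q → y < q → w < q → q < z → ¬(x < w ∧ y < w) →
      InRp G {x, y, z} → InRm G {w, q, z} → InF G {x, w}
  | x7a' {x y q w z : Fin m} : [x, y, q, w, z].Pairwise (· ≠ ·) →
      x < q → y < q → w < q → q < z → ¬(x < w ∧ y < w) →
      InRm G {x, y, z} → InRp G {w, q, z} → InF G {x, w}
  | x7b {x y q w z : Fin m} : [x, y, q, w, z].Pairwise (· ≠ ·) →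
      x < q → y < q → w < q → q < z → ¬(x < w ∧ y < w) →
      InRp G {x, y, z} → InRm G {w, q, z} → InF G {y, w}
  | x7b' {x y q w z : Fin m} : [x, y, q, w, z].Pairwise (· ≠ ·) →
      x < q → y < q → w < q → q < z → ¬(x < w ∧ y < w) →
      InRm G {x, y, z} → InRp G {w, q, z} → InF G {y, w}

/-- Membership in the closure set `R⁺` of triples. -/
inductive InRp {m : ℕ} (G : SimpleGraph (Fin m)) : Finset (Fin m) → Prop
  | x2 {x y w z : Fin m} : [x, y, w, z].Pairwise (· ≠ ·) →
      x < z → y < z → w < z →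
      InF G {w, z} → InRm G {x, y, z} → InRp G {x, y, w}
  | x4 {x y w z : Fin m} : [x, y, w, z].Pairwise (· ≠ ·) →
      x < y → w < y → y < z →
      InRp G {x, y, z} → InRm G {w, y, z} → InRp G {x, y, w}
  | x5p {x y w z : Fin m} : [x, y, w, z].Pairwise (· ≠ ·) →
      x < z → y < z → w < z →
      InRp G {x, y, z} → InRp G {w, y, z} → InRp G {x, y, w}
  | x5m {x y w z : Fin m} : [x, y, w, z].Pairwise (· ≠ ·) →
      x < z → y < z → w < z →
      InRm G {x, y, z} → InRm G {w, y, z} → InRp G {x, y, w}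
  | x6ap {x y q w z : Fin m} : [x, y, q, w, z].Pairwise (· ≠ ·) →
      x < q → y < q → w < q → q < z →
      InRp G {x, y, z} → InRp G {w, q, z} → InRp G {x, y, w}
  | x6am {x y q w z : Fin m} : [x, y, q, w, z].Pairwise (· ≠ ·) →
      x < q → y < q → w < q → q < z →
      InRm G {x, y, z} → InRm G {w, q, z} → InRp G {x, y, w}
  | x6bp {x y q w z : Fin m} : [x, y, q, w, z].Pairwise (· ≠ ·) →
      x < q → y < q → w < q → q < z →
      InRp G {x, y, z} → InRp G {w, q, z} → InRp G {x, y, q}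
  | x6bm {x y q w z : Fin m} : [x, y, q, w, z].Pairwise (· ≠ ·) →
      x < q → y < q → w < q → q < z →
      InRm G {x, y, z} → InRm G {w, q, z} → InRp G {x, y, q}

/-- Membership in the closure set `R⁻` of triples. -/
inductive InRm {m : ℕ} (G : SimpleGraph (Fin m)) : Finset (Fin m) → Prop
  | x1 {x y z : Fin m} : [x, y, z].Pairwise (· ≠ ·) →
      x < z → y < z →
      InF G {x, z} → InF G {y, z} → InRm G {x, y, z}
  | x3 {x y w z : Fin m} : [x, y, w, z].Pairwise (· ≠ ·) →
      x < z → y < z → w < z → x < w → y < w →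
      InF G {w, z} → InRp G {x, y, z} → InRm G {x, y, w}
  | x7a {x y q w z : Fin m} : [x, y, q, w, z].Pairwise (· ≠ ·) →
      x < q → y < q → w < q → q < z →
      InRp G {x, y, z} → InRm G {w, q, z} → InRm G {x, y, q}
  | x7a' {x y q w z : Fin m} : [x, y, q, w, z].Pairwise (· ≠ ·) →
      x < q → y < q → w < q → q < z →
      InRm G {x, y, z} → InRp G {w, q, z} → InRm G {x, y, q}
  | x7b {x y q w z : Fin m} : [x, y, q, w, z].Pairwise (· ≠ ·) →
      x < q → y < q → w < q → q < z → x < w → y < w →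
      InRp G {x, y, z} → InRm G {w, q, z} → InRm G {x, y, w}
  | x7b' {x y q w z : Fin m} : [x, y, q, w, z].Pairwise (· ≠ ·) →
      x < q → y < q → w < q → q < z → x < w → y < w →
      InRm G {x, y, z} → InRp G {w, q, z} → InRm G {x, y, w}
end


/-! ### Auxiliary lemmas for Statement 4 -/

lemma lamWalk_concat {m : ℕ} (β : Fin m → ℕ) (a b : Fin m) (L : List (Fin m)) :
    lamWalk β (a :: (L ++ [b])) =
      ((L.length : ℤ) + 1) - 2 * (L.map fun w => (β w : ℤ) - 1).sum := by
  simp [lamWalk, List.dropLast_concat]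

lemma lamWalk_comb {m : ℕ} (β : Fin m → ℕ) (x y z : Fin m) (Q₁ Q₂ : List (Fin m)) :
    lamWalk β (x :: (Q₁ ++ y :: Q₂ ++ [z])) =
      lamWalk β (x :: (Q₁ ++ [y])) + lamWalk β (y :: (Q₂ ++ [z])) - 2 * ((β y : ℤ) - 1) := by
  have h : x :: (Q₁ ++ y :: Q₂ ++ [z]) = x :: ((Q₁ ++ y :: Q₂) ++ [z]) := by simp
  rw [h, lamWalk_concat, lamWalk_concat, lamWalk_concat]
  simp [List.sum_append]
  ring

/-- Key induction: lower bound and parity of `λ` of a looping walk. -/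
lemma looping_key {m : ℕ} {G : SimpleGraph (Fin m)} (β : Fin m → ℕ)
    (hβ : ∀ v, β v = 1 ∨ β v = 2) (c : Fin m → Bool)
    (hc : ∀ u v, G.Adj u v → c u ≠ c v) :
    ∀ Q, IsLoopingWalk G Q → ∀ x z : Fin m, Q.head? = some x → Q.getLast? = some z →
      (2 - 3 ^ ((Finset.univ.filter fun w => x < w ∧ z < w).card) ≤ lamWalk β Q ∧
       lamWalk β Q % 2 = (if c x = c z then 0 else 1)) := by
  intro Q hQ
  induction hQ with
  | @base a b hadj =>
    intro x z hx hz
    simp only [List.head?] at hx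
    have hxa : x = a := by simpa using hx.symm
    have hzb : z = b := by
      have : ([a, b] : List (Fin m)).getLast? = some b := by simp
      rw [this] at hz; simpa using hz.symm
    subst hxa; subst hzb
    have hlam : lamWalk β [x, z] = 1 := by
      show lamWalk β (x :: ([] ++ [z])) = 1
      rw [lamWalk_concat]; simp
    constructor
    · rw [hlam]
      have h1 : (1 : ℤ) ≤ 3 ^ ((Finset.univ.filter fun w => x < w ∧ z < w).card) :=
        one_le_pow₀ (by norm_num)
      linarith
    · rw [hlam, if_neg (hc x z hadj)]
      norm_num
  | @comb a y b Q₁ Q₂ h1 h2 hne hall ih1 ih2 =>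
    intro x z hx hz
    have hxa : x = a := by simpa using hx.symm
    have hzb : z = b := by
      have hsh : a :: (Q₁ ++ y :: Q₂ ++ [b]) = (a :: (Q₁ ++ y :: Q₂)) ++ [b] := by simp
      rw [hsh, List.getLast?_concat] at hz
      simpa using hz.symm
    subst hxa; subst hzb
    have hymem : y ∈ Q₁ ++ y :: Q₂ := by simp
    have hay : x < y := (hall y hymem).1
    have hzy : z < y := (hall y hymem).2
    have e1 := ih1 x y (by simp) (by
      have : x :: (Q₁ ++ [y]) = (x :: Q₁) ++ [y] := by simp
      rw [this, List.getLast?_concat])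
    have e2 := ih2 y z (by simp) (by
      have : y :: (Q₂ ++ [z]) = (y :: Q₂) ++ [z] := by simp
      rw [this, List.getLast?_concat])
    rw [lamWalk_comb]
    set A : Finset (Fin m) := Finset.univ.filter fun w => x < w ∧ z < w with hA
    set A₁ : Finset (Fin m) := Finset.univ.filter fun w => x < w ∧ y < w with hA1
    set A₂ : Finset (Fin m) := Finset.univ.filter fun w => y < w ∧ z < w with hA2
    have hsub1 : A₁ ⊂ A := by
      constructor
      · intro w hw
        simp only [hA1, Finset.mem_filter] at hw
        simp only [hA, Finset.mem_filter]
        exact ⟨Finset.mem_univ _, hw.2.1, hzy.trans hw.2.2⟩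
      · intro hsub
        have : y ∈ A₁ := hsub (by simp [hA, hay, hzy])
        simp [hA1] at this
    have hsub2 : A₂ ⊂ A := by
      constructor
      · intro w hw
        simp only [hA2, Finset.mem_filter] at hw
        simp only [hA, Finset.mem_filter]
        exact ⟨Finset.mem_univ _, hay.trans hw.2.1, hw.2.2⟩
      · intro hsub
        have : y ∈ A₂ := hsub (by simp [hA, hay, hzy])
        simp [hA2] at this
    have hc1 : A₁.card < A.card := Finset.card_lt_card hsub1
    have hc2 : A₂.card < A.card := Finset.card_lt_card hsub2
    have hk : A.card = (A.card - 1) + 1 := by omega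
    have hpow1 : (3 : ℤ) ^ A₁.card ≤ 3 ^ (A.card - 1) :=
      pow_le_pow_right₀ (by norm_num) (by omega)
    have hpow2 : (3 : ℤ) ^ A₂.card ≤ 3 ^ (A.card - 1) :=
      pow_le_pow_right₀ (by norm_num) (by omega)
    have hpow3 : (3 : ℤ) ^ A.card = 3 ^ (A.card - 1) * 3 := by
      conv_lhs => rw [hk, pow_succ]
    have hβy : (1 : ℤ) ≤ (β y : ℤ) ∧ (β y : ℤ) ≤ 2 := by
      rcases hβ y with h | h <;> rw [h] <;> norm_num
    constructor
    · have hp : (0 : ℤ) < 3 ^ (A.card - 1) := by positivity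
      linarith [e1.1, e2.1]
    · have p1 := e1.2
      have p2 := e2.2
      by_cases hxy : c x = c y <;> by_cases hyz : c y = c z
      · rw [if_pos hxy] at p1; rw [if_pos hyz] at p2
        rw [if_pos (hxy.trans hyz)]; omega
      · rw [if_pos hxy] at p1; rw [if_neg hyz] at p2
        rw [if_neg (fun h => hyz (hxy ▸ h))]; omega
      · rw [if_neg hxy] at p1; rw [if_pos hyz] at p2
        rw [if_neg (fun h => hxy (hyz ▸ h))]; omega
      · rw [if_neg hxy] at p1; rw [if_neg hyz] at p2
        have hxz : c x = c z := by
          revert hxy hyz; cases c x <;> cases c y <;> cases c z <;> decide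
        rw [if_pos hxz]; omega

lemma exists_delta {m : ℕ} {G : SimpleGraph (Fin m)} (β : Fin m → ℕ)
    (hβ : ∀ v, β v = 1 ∨ β v = 2) (c : Fin m → Bool)
    (hc : ∀ u v, G.Adj u v → c u ≠ c v) {u v : Fin m} (h : G.Adj u v) :
    ∃ d : ℤ, IsDelta G β u v d := by
  classical
  set P : ℤ → Prop := fun d => ∃ Q, LoopingWalkBetween G u v Q ∧ lamWalk β Q = d with hP
  have hinh : ∃ d, P d := by
    refine ⟨lamWalk β [u, v], [u, v], ⟨IsLoopingWalk.base h, Or.inl ⟨rfl, by simp⟩⟩, rfl⟩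
  have hbdd : ∃ b : ℤ, ∀ d, P d → b ≤ d := by
    refine ⟨2 - 3 ^ m, ?_⟩
    rintro d ⟨Q, ⟨hQ, hends⟩, rfl⟩
    have key : ∀ x z : Fin m, Q.head? = some x → Q.getLast? = some z →
        2 - (3 : ℤ) ^ m ≤ lamWalk β Q := by
      intro x z hx hz
      have := (looping_key β hβ c hc Q hQ x z hx hz).1
      have hcard : (Finset.univ.filter fun w => x < w ∧ z < w).card ≤ m :=
        le_trans (Finset.card_filter_le _ _) (by simp)
      have : (3 : ℤ) ^ ((Finset.univ.filter fun w => x < w ∧ z < w).card) ≤ 3 ^ m :=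
        pow_le_pow_right₀ (by norm_num) hcard
      linarith [(looping_key β hβ c hc Q hQ x z hx hz).1]
    rcases hends with ⟨hx, hz⟩ | ⟨hx, hz⟩
    · exact key u v hx hz
    · exact key v u hx hz
  obtain ⟨lb, hlb, hmin⟩ := Int.exists_least_of_bdd hbdd hinh
  exact ⟨lb, hlb, fun Q hQ => hmin _ ⟨Q, hQ, rfl⟩⟩

/-- If `G` is bipartite and `f : V → ℤ` satisfies, for all `u, v` with
`δ(u,v) < ∞`, `|f(u) − f(v)| ≤ δ(u,v)` and `f(u) + f(v) + δ(u,v)` even, then `f` is a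
homomorphism of `G` to `P_∞`: every edge `uv` of `G` has `|f(u) − f(v)| = 1`. -/
theorem hom_of_conditions {m : ℕ} (β : Fin m → ℕ) (hβ : ∀ v, β v = 1 ∨ β v = 2)
    (G : SimpleGraph (Fin m)) (hbip : Bipartite G) (f : Fin m → ℤ)
    (hf : ∀ u v : Fin m, ∀ d : ℤ, IsDelta G β u v d →
      |f u - f v| ≤ d ∧ Even (f u + f v + d)) :
    ∀ u v : Fin m, G.Adj u v → |f u - f v| = 1 := by
  obtain ⟨c, hc⟩ := hbip
  intro u v huv
  obtain ⟨d, hd⟩ := exists_delta β hβ c hc huv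
  obtain ⟨hle, heven⟩ := hf u v d hd
  -- d ≤ 1 from the length-1 looping walk [u, v]
  have hd1 : d ≤ 1 := by
    have := hd.2 [u, v] ⟨IsLoopingWalk.base huv, Or.inl ⟨rfl, by simp⟩⟩
    have hlam : lamWalk β [u, v] = 1 := by
      show lamWalk β (u :: ([] ++ [v])) = 1
      rw [lamWalk_concat]; simp
    rw [hlam] at this; exact this
  -- d is odd
  have hodd : d % 2 = 1 := by
    obtain ⟨Q, ⟨hQ, hends⟩, hlam⟩ := hd.1
    have hcuv : c u ≠ c v := hc u v huv
    rcases hends with ⟨hx, hz⟩ | ⟨hx, hz⟩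
    · have := (looping_key β hβ c hc Q hQ u v hx hz).2
      rw [hlam, if_neg hcuv] at this; exact this
    · have := (looping_key β hβ c hc Q hQ v u hx hz).2
      rw [hlam, if_neg (fun h => hcuv h.symm)] at this; exact this
  have habs : 0 ≤ |f u - f v| := abs_nonneg _
  have hdeq : d = 1 := by omega
  subst hdeq
  obtain ⟨k, hk⟩ := heven
  have h1 : -1 ≤ f u - f v ∧ f u - f v ≤ 1 := abs_le.mp hle
  have : f u - f v = 1 ∨ f u - f v = -1 := by omega
  rcases this with h | h <;> rw [h] <;> norm_num

end CountingCSP
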